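/- Let (G, v₀) be a turn-based game and ∼ a bisimulation equivalence on it that respects the partition and such that bisimilar plays have equal gain profiles. If σ is a uniform subgame perfect equilibrium in (G, v₀), then the strategy profile τ in the quotient game defined by τᵢ([h₀]…[hₙ]) = [σᵢ(h₀…hₙ)] (for any representative history h₀…hₙ, well-defined by uniformity) satisfies: the outcome of τ from [v₀] is the componentwise class of the outcome of σ from v₀, i.e., Out(τ)([v₀])ₙ = [Out(σ)(v₀)ₙ] for all n. -/

import Mathlib

/-! The outcome of `σ` is built history by history, and each history it passes through is a
genuine history of the game because `σ` is valid. On genuine histories `τ` agrees with `σ` up to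
the class map `v ↦ [v]`, so by induction the histories generated by `τ` from `[v₀]` are the
images of those generated by `σ` from `v₀`. -/

/-- A history: a finite path starting at `v0`. -/
def IsHist {V : Type} (E : V → V → Prop) (v0 : V) (h : List V) : Prop :=
  h.head? = some v0 ∧ h.Chain' E

/-- Last vertex of a history (with default `v0`). -/
def lastOf {V : Type} (v0 : V) (h : List V) : V := h.getLast?.getD v0

/-- A strategy profile `σ : P → List V → V` is valid if on every history it
proposes a successor of the last vertex. -/
def ValidProfile {V P : Type} (E : V → V → Prop) (owner : V → P) (v0 : V)
    (σ : P → List V → V) : Prop :=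
  ∀ h, IsHist E v0 h → E (lastOf v0 h) (σ (owner (lastOf v0 h)) h)

/-- The successive histories produced by playing `σ` after the history `h0`. -/
def outHistFrom {V P : Type} (owner : V → P) (σ : P → List V → V) (v0 : V) (h0 : List V) :
    ℕ → List V
  | 0 => h0
  | n + 1 =>
      outHistFrom owner σ v0 h0 n ++
        [σ (owner (lastOf v0 (outHistFrom owner σ v0 h0 n))) (outHistFrom owner σ v0 h0 n)]

/-- The infinite play obtained by the history `h0` followed by the outcome of `σ`. -/
def playFrom {V P : Type} (owner : V → P) (σ : P → List V → V) (v0 : V) (h0 : List V)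
    (n : ℕ) : V :=
  (outHistFrom owner σ v0 h0 (n + 1)).getD n v0

/-- The outcome of the strategy profile `σ` from `v0`. -/
def outcomeSeq {V P : Type} (owner : V → P) (σ : P → List V → V) (v0 : V) : ℕ → V :=
  playFrom owner σ v0 [v0]

/-- `σ` is a Nash equilibrium from `v0`: no player has a profitable deviation. -/
def IsNE {V P : Type} [DecidableEq P] (E : V → V → Prop) (owner : V → P) (v0 : V)
    (Gain : P → (ℕ → V) → Prop) (σ : P → List V → V) : Prop :=
  ∀ (i : P) (σ' : List V → V), (∀ h, IsHist E v0 h → E (lastOf v0 h) (σ' h)) →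
    Gain i (outcomeSeq owner (Function.update σ i σ') v0) → Gain i (outcomeSeq owner σ v0)

/-- `σ` is a subgame perfect equilibrium from `v0`: after every history, no player has a
profitable deviation (gains being evaluated on the full play extending the history). -/
def IsSPE {V P : Type} [DecidableEq P] (E : V → V → Prop) (owner : V → P) (v0 : V)
    (Gain : P → (ℕ → V) → Prop) (σ : P → List V → V) : Prop :=
  ∀ h0, IsHist E v0 h0 →
    ∀ (i : P) (σ' : List V → V), (∀ h, IsHist E v0 h → E (lastOf v0 h) (σ' h)) →
      Gain i (playFrom owner (Function.update σ i σ') v0 h0) →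
      Gain i (playFrom owner σ v0 h0)

/-- `σ` is uniform w.r.t. the relation `r`: on componentwise `r`-related histories,
each player's choices are `r`-related. -/
def Uniform {V P : Type} (E : V → V → Prop) (v0 : V) (r : V → V → Prop)
    (σ : P → List V → V) : Prop :=
  ∀ (i : P) (h h' : List V), IsHist E v0 h → IsHist E v0 h' → List.Forall₂ r h h' →
    r (σ i h) (σ i h')

/-- Edges of the quotient game. -/
def QEdge {V : Type} (s : Setoid V) (E : V → V → Prop) :
    Quotient s → Quotient s → Prop :=
  fun c c' => ∃ v v', Quotient.mk s v = c ∧ Quotient.mk s v' = c' ∧ E v v'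

section Projection

variable {V W P : Type} {E : V → V → Prop} {owner : V → P} {v0 : V} {σ : P → List V → V}

theorem lastOf_map (f : V → W) (v0 : V) (h : List V) :
    lastOf (f v0) (h.map f) = f (lastOf v0 h) := by
  cases h using List.reverseRecOn <;> simp [lastOf]

theorem IsHist.append_singleton {h : List V} {w : V} (hh : IsHist E v0 h)
    (hw : E (lastOf v0 h) w) : IsHist E v0 (h ++ [w]) := by
  obtain ⟨hhead, hchain⟩ := hh
  have hne : h ≠ [] := by rintro rfl; simp at hhead
  refine ⟨by rwa [List.head?_append_of_ne_nil _ hne], ?_⟩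
  rw [List.Chain', List.isChain_append]
  refine ⟨hchain, List.isChain_singleton w, fun x hx y hy => ?_⟩
  simp only [List.head?_cons, Option.mem_def, Option.some.injEq] at hy
  subst hy
  rw [Option.mem_def] at hx
  simpa [lastOf, hx] using hw

theorem ValidProfile.isHist_outHistFrom (hvalid : ValidProfile E owner v0 σ) {h0 : List V}
    (h0hist : IsHist E v0 h0) (n : ℕ) : IsHist E v0 (outHistFrom owner σ v0 h0 n) := by
  induction n with
  | zero => exact h0hist
  | succ n ih => exact ih.append_singleton (hvalid _ ih)

variable {owner' : W → P} {τ : P → List W → W} {f : V → W}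

theorem outHistFrom_map (hvalid : ValidProfile E owner v0 σ)
    (howner : ∀ v, owner' (f v) = owner v)
    (hτ : ∀ i h, IsHist E v0 h → τ i (h.map f) = f (σ i h)) {h0 : List V}
    (h0hist : IsHist E v0 h0) (n : ℕ) :
    outHistFrom owner' τ (f v0) (h0.map f) n = (outHistFrom owner σ v0 h0 n).map f := by
  induction n with
  | zero => rfl
  | succ n ih =>
    rw [outHistFrom, outHistFrom, ih, lastOf_map, howner,
      hτ _ _ (hvalid.isHist_outHistFrom h0hist n), List.map_append, List.map_singleton]

theorem playFrom_map (hvalid : ValidProfile E owner v0 σ)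
    (howner : ∀ v, owner' (f v) = owner v)
    (hτ : ∀ i h, IsHist E v0 h → τ i (h.map f) = f (σ i h)) {h0 : List V}
    (h0hist : IsHist E v0 h0) (n : ℕ) :
    playFrom owner' τ (f v0) (h0.map f) n = f (playFrom owner σ v0 h0 n) := by
  rw [playFrom, playFrom, outHistFrom_map hvalid howner hτ h0hist, List.getD_map]

theorem outcomeSeq_map (hvalid : ValidProfile E owner v0 σ)
    (howner : ∀ v, owner' (f v) = owner v)
    (hτ : ∀ i h, IsHist E v0 h → τ i (h.map f) = f (σ i h)) (n : ℕ) :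
    outcomeSeq owner' τ (f v0) n = f (outcomeSeq owner σ v0 n) :=
  playFrom_map hvalid howner hτ ⟨rfl, List.isChain_singleton v0⟩ n

end Projection

theorem stmt9_general {V P : Type} (E : V → V → Prop) (owner : V → P) (v0 : V)
    (s : Setoid V)
    (σ : P → List V → V)
    (hvalid : ValidProfile E owner v0 σ)
    (qowner : Quotient s → P) (hqowner : ∀ v, qowner (Quotient.mk s v) = owner v)
    (τ : P → List (Quotient s) → Quotient s)
    (hτ : ∀ (i : P) (h : List V), IsHist E v0 h →
      τ i (h.map (Quotient.mk s)) = Quotient.mk s (σ i h)) :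
    ∀ n, outcomeSeq qowner τ (Quotient.mk s v0) n =
      Quotient.mk s (outcomeSeq owner σ v0 n) :=
  outcomeSeq_map hvalid hqowner hτ

/-- If `σ` is a uniform SPE of `(G, v₀)` and `τ` is the quotient-game strategy profile
defined by `τᵢ([h₀]…[hₙ]) = [σᵢ(h₀…hₙ)]` (well-defined by uniformity), then the outcome
of `τ` from `[v₀]` is componentwise the class of the outcome of `σ` from `v₀`. -/
theorem stmt9 {V P : Type} [DecidableEq P] (E : V → V → Prop) (owner : V → P) (v0 : V)
    (Gain : P → (ℕ → V) → Prop) (s : Setoid V)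
    (hbisim : ∀ v v' w, s.r v v' → E v w → ∃ w', E v' w' ∧ s.r w w')
    (hpart : ∀ v v', s.r v v' → owner v = owner v')
    (hgain : ∀ (i : P) (ρ ρ' : ℕ → V), (∀ n, s.r (ρ n) (ρ' n)) → (Gain i ρ ↔ Gain i ρ'))
    (σ : P → List V → V)
    (hvalid : ValidProfile E owner v0 σ)
    (hunif : Uniform E v0 s.r σ)
    (hSPE : IsSPE E owner v0 Gain σ)
    (qowner : Quotient s → P) (hqowner : ∀ v, qowner (Quotient.mk s v) = owner v)
    (τ : P → List (Quotient s) → Quotient s)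
    (hτ : ∀ (i : P) (h : List V), IsHist E v0 h →
      τ i (h.map (Quotient.mk s)) = Quotient.mk s (σ i h)) :
    ∀ n, outcomeSeq qowner τ (Quotient.mk s v0) n =
      Quotient.mk s (outcomeSeq owner σ v0 n) :=
  stmt9_general E owner v0 s σ hvalid qowner hqowner τ hτ
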